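/- Under the isomorphism Cl(V ⊕ ℝ^{1,1}) ≅ Mat₂(Cl(V)), the Clifford conjugation is given by [[a,b],[c,d]] ↦ [[d~, -b~],[-c~, a~]], where x~ denotes the reversal on Cl(V). -/

import Mathlib

open CliffordAlgebra

noncomputable def negQhat {V : Type*} [AddCommGroup V] [Module ℝ V]
    (Q : QuadraticForm ℝ V) : QuadraticForm ℝ (V × ℝ × ℝ) :=
  QuadraticMap.prod (-Q) (QuadraticMap.prod QuadraticMap.sq (-QuadraticMap.sq))

/-- The Clifford map `j : V ⊕ ℝ^{1,1} → Mat₂(Cl(V))`,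
`j(v + x₋e₋ + x₊e₊) = [[v, x₋-x₊],[x₋+x₊, -v]]` (convention `v² = -Q v`). -/
noncomputable def jmat {V : Type*} [AddCommGroup V] [Module ℝ V]
    (Q : QuadraticForm ℝ V) (x : V × ℝ × ℝ) :
    Matrix (Fin 2) (Fin 2) (CliffordAlgebra (-Q)) :=
  !![ι (-Q) x.1, algebraMap ℝ _ (x.2.1 - x.2.2);
     algebraMap ℝ _ (x.2.1 + x.2.2), -ι (-Q) x.1]

/-!
Both `y ↦ F (reverse (involute y))` and `y ↦ [[d~, -b~], [-c~, a~]] ∘ F` are algebra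
homomorphisms `Cl(V ⊕ ℝ^{1,1}) → Mat₂(Cl(V))ᵐᵒᵖ`: the first because grade involution is an
automorphism and reversal an anti-automorphism, the second because `M ↦ adj M` is
anti-multiplicative on 2 × 2 matrices, also with entries twisted by an anti-automorphism.
By the universal property they agree once they agree on generators, and both send `x` to `-j(x)`.
-/

open MulOpposite

namespace Matrix

variable {R A : Type*} [CommRing R] [Ring A] [Algebra R A]

def finTwoAdjugateOp (σ : A →ₐ[R] Aᵐᵒᵖ) :
    Matrix (Fin 2) (Fin 2) A →ₐ[R] (Matrix (Fin 2) (Fin 2) A)ᵐᵒᵖ where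
  toFun M := op !![unop (σ (M 1 1)), -unop (σ (M 0 1)); -unop (σ (M 1 0)), unop (σ (M 0 0))]
  map_one' := by
    simp [one_fin_two]
  map_mul' M N := by
    rw [← op_mul, op_inj, eta_fin_two M, eta_fin_two N, mul_fin_two, mul_fin_two]
    simp only [of_apply, cons_val', cons_val_zero, cons_val_one, empty_val', cons_val_fin_one,
      map_add, map_mul, unop_add, unop_mul, neg_mul, mul_neg, neg_neg, neg_add_rev]
    rw [add_comm (unop (σ (N 0 1)) * _), add_comm (unop (σ (N 0 0)) * _)]
  map_zero' := by
    rw [← op_zero, op_inj]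
    ext i j
    fin_cases i <;> fin_cases j <;> simp
  map_add' M N := by
    rw [← op_add, op_inj]
    ext i j
    fin_cases i <;> fin_cases j <;> simp [add_comm]
  commutes' r := by
    rw [MulOpposite.algebraMap_apply, op_inj, algebraMap_eq_diagonal]
    ext i j
    fin_cases i <;> fin_cases j <;> simp

theorem finTwoAdjugateOp_apply (σ : A →ₐ[R] Aᵐᵒᵖ) (a b c d : A) :
    finTwoAdjugateOp σ !![a, b; c, d] =
      op !![unop (σ d), -unop (σ b); -unop (σ c), unop (σ a)] :=
  rfl

end Matrix

theorem finTwoAdjugateOp_reverseOp_jmat {V : Type*} [AddCommGroup V] [Module ℝ V]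
    (Q : QuadraticForm ℝ V) (x : V × ℝ × ℝ) :
    Matrix.finTwoAdjugateOp reverseOp (jmat Q x) = op (-jmat Q x) := by
  simp [jmat, Matrix.finTwoAdjugateOp_apply, Matrix.neg_of]

theorem clifford_conjugation_matrix (V : Type*) [AddCommGroup V] [Module ℝ V]
    (Q : QuadraticForm ℝ V)
    (F : CliffordAlgebra (negQhat Q) ≃ₐ[ℝ] Matrix (Fin 2) (Fin 2) (CliffordAlgebra (-Q)))
    (hF : ∀ x : V × ℝ × ℝ, F (ι (negQhat Q) x) = jmat Q x)
    (a b c d : CliffordAlgebra (-Q)) :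
    F (reverse (involute (F.symm !![a, b; c, d]))) =
      !![reverse d, -reverse b; -reverse c, reverse a] := by
  have hom : (Matrix.finTwoAdjugateOp reverseOp).comp F.toAlgHom =
      F.toAlgHom.op.comp (reverseOp.comp involute) :=
    hom_ext <| LinearMap.ext fun x => by
      simp [hF, finTwoAdjugateOp_reverseOp_jmat]
  have hM := congrArg unop (DFunLike.congr_fun hom (F.symm !![a, b; c, d]))
  simpa [Matrix.finTwoAdjugateOp_apply] using hM.symm
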